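/- arXiv:2308.07012 — 2 statements merged into one kernel-verified Lean document; each statement's English description precedes it below -/
import Mathlib

section
/- If f, g : ℤ → ℝ are two unimodal functions on {a,...,b} with unique maximizers p and q respectively, and g - f is monotone nondecreasing on {a,...,b}, then q ≥ p, i.e. argmax g ≥ argmax f. -/
/-- If `f, g : {a,...,b} → ℝ` are unimodal with unique peaks `p` and `q` respectively,
and `g - f` is monotone nondecreasing on `{a,...,b}`, then `argmax g ≥ argmax f`. -/
theorem argmax_mono_of_monotone_diff (a b p q : ℤ) (f g : ℤ → ℝ)
    (hp : p ∈ Set.Icc a b) (hq : q ∈ Set.Icc a b)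
    (hfinc : StrictMonoOn f (Set.Icc a p)) (hfdec : StrictAntiOn f (Set.Icc p b))
    (hginc : StrictMonoOn g (Set.Icc a q)) (hgdec : StrictAntiOn g (Set.Icc q b))
    (hδ : MonotoneOn (fun x => g x - f x) (Set.Icc a b)) :
    p ≤ q := by
  by_contra h
  push_neg at h
  have hfq : f q < f p := hfinc ⟨hq.1, le_of_lt h⟩ ⟨le_trans hq.1 (le_of_lt h), le_refl p⟩ h
  have hgp : g p < g q := hgdec ⟨le_refl q, le_trans (le_of_lt h) hp.2⟩ ⟨le_of_lt h, hp.2⟩ h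
  have := hδ ⟨hq.1, hq.2⟩ ⟨hp.1, hp.2⟩ (le_of_lt h)
  simp only at this
  linarith
end

section
/- For the two-segment Gaussian mean model, the total unnormalized log-likelihood split score L(τ) = -∑_{t<τ}(y_t - ȳ_{<τ})² - ∑_{t≥τ}(y_t - ȳ_{≥τ})² applied to the noiseless piecewise-constant signal (y_t = a for t < c*, = b for t ≥ c*, a ≠ b) is uniquely maximized at τ = c*. -/
/-! At `τ = c` both segments are constant, so both sums of squares vanish and `L c = 0`.
For any other `τ`, one of the two segments contains points on both sides of `c`, hence two
distinct values, and a sum of squared deviations over such a segment is positive whatever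
the centre. -/

/-- Sample mean of the values of `y` over the integer segment `{i,...,j}`. -/
noncomputable def segMean (y : ℤ → ℝ) (i j : ℤ) : ℝ :=
  (∑ t ∈ Finset.Icc i j, y t) / (Finset.Icc i j).card

open Finset

lemma segMean_eq_of_eqOn {y : ℤ → ℝ} {i j : ℤ} {k : ℝ} (hk : ∀ t ∈ Icc i j, y t = k)
    (hij : (Icc i j).Nonempty) : segMean y i j = k := by
  rw [segMean, sum_congr rfl hk, sum_const, nsmul_eq_mul,
    mul_div_cancel_left₀ k (Nat.cast_ne_zero.2 hij.card_pos.ne')]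

lemma sum_sq_sub_segMean_eq_zero_of_eqOn {y : ℤ → ℝ} {i j : ℤ} {k : ℝ}
    (hk : ∀ t ∈ Icc i j, y t = k) : ∑ t ∈ Icc i j, (y t - segMean y i j) ^ 2 = 0 :=
  sum_eq_zero fun t ht => by rw [hk t ht, segMean_eq_of_eqOn hk ⟨t, ht⟩, sub_self, sq, zero_mul]

lemma sum_sq_sub_pos_of_ne {ι : Type*} {s : Finset ι} {f : ι → ℝ} (m : ℝ) {i j : ι}
    (hi : i ∈ s) (hj : j ∈ s) (hij : f i ≠ f j) : 0 < ∑ t ∈ s, (f t - m) ^ 2 := by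
  obtain ⟨k, hk, hkm⟩ : ∃ k ∈ s, f k ≠ m := by
    by_contra! h
    exact hij ((h i hi).trans (h j hj).symm)
  exact sum_pos' (fun _ _ => sq_nonneg _) ⟨k, hk, sq_pos_of_ne_zero (sub_ne_zero.2 hkm)⟩

theorem two_segment_split_score_unique_max_general (T c : ℤ) (a b : ℝ)
    (hc : 2 ≤ c) (hcT : c ≤ T - 1) (hab : a ≠ b)
    (y : ℤ → ℝ) (hy : y = fun t => if t < c then a else b)
    (L : ℤ → ℝ)
    (hL : L = fun τ =>
      -(∑ t ∈ Finset.Icc 1 (τ - 1), (y t - segMean y 1 (τ - 1)) ^ 2) -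
        ∑ t ∈ Finset.Icc τ T, (y t - segMean y τ T) ^ 2) :
    ∀ τ ∈ Set.Icc (2 : ℤ) T, τ ≠ c → L τ < L c := by
  rintro τ ⟨hτ2, hτT⟩ hτc
  have hya : ∀ t ∈ Icc 1 (c - 1), y t = a := fun t ht => by
    simp [hy, show t < c by grind]
  have hyb : ∀ t ∈ Icc c T, y t = b := fun t ht => by
    simp [hy, show ¬t < c by grind]
  have hleft := sum_nonneg fun t (_ : t ∈ Icc 1 (τ - 1)) => sq_nonneg (y t - segMean y 1 (τ - 1))
  have hright := sum_nonneg fun t (_ : t ∈ Icc τ T) => sq_nonneg (y t - segMean y τ T)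
  subst hL
  simp only [sum_sq_sub_segMean_eq_zero_of_eqOn hya, sum_sq_sub_segMean_eq_zero_of_eqOn hyb]
  rcases lt_or_gt_of_ne hτc with hlt | hgt
  · have hright_pos := sum_sq_sub_pos_of_ne (segMean y τ T)
      (s := Icc τ T) (f := y) (i := τ) (j := c) (by grind) (by grind) (by simp [hy, hlt, hab])
    linarith
  · have hleft_pos := sum_sq_sub_pos_of_ne (segMean y 1 (τ - 1))
      (s := Icc 1 (τ - 1)) (f := y) (i := 1) (j := c) (by grind) (by grind)
      (by simp [hy, hab]; omega)
    linarith

/-- Two-segment Gaussian mean model: the total unnormalized log-likelihood split score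
`L(τ) = -∑_{t<τ}(y_t - ȳ_{<τ})² - ∑_{t≥τ}(y_t - ȳ_{≥τ})²` applied to the noiseless
piecewise-constant signal (`y t = a` for `t < c`, `y t = b` for `t ≥ c`, `a ≠ b`) is
uniquely maximized over `{2,...,T}` at `τ = c`. -/
theorem two_segment_split_score_unique_max (T c : ℤ) (a b : ℝ)
    (hT : 3 ≤ T) (hc : 2 ≤ c) (hcT : c ≤ T - 1) (hab : a ≠ b)
    (y : ℤ → ℝ) (hy : y = fun t => if t < c then a else b)
    (L : ℤ → ℝ)
    (hL : L = fun τ =>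
      -(∑ t ∈ Finset.Icc 1 (τ - 1), (y t - segMean y 1 (τ - 1)) ^ 2) -
        ∑ t ∈ Finset.Icc τ T, (y t - segMean y τ T) ^ 2) :
    ∀ τ ∈ Set.Icc (2 : ℤ) T, τ ≠ c → L τ < L c :=
  two_segment_split_score_unique_max_general T c a b hc hcT hab y hy L hL
end
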